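/- The quantities C_1 = 2⟨y,z⟩ + ⟨x,x⟩, C_2 = 2⟨x,z⟩, and C_3 = ⟨z,z⟩ are conserved along any solution of the system ẏ = b∧x, ẋ = y∧x + b∧z, ż = y∧z. -/

import Mathlib

/-!
Differentiating each quantity with the product rule leaves only triple products.
Those of the form `u ⬝ᵥ u ⨯₃ w` vanish, and the rest cancel in pairs because
`v ↦ u ⨯₃ v` is skew-adjoint for the dot product.
-/

open Matrix

theorem HasDerivAt.dotProduct {𝕜 ι : Type*} [NontriviallyNormedField 𝕜] [Fintype ι]
    {f g : 𝕜 → ι → 𝕜} {f' g' : ι → 𝕜} {t : 𝕜}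
    (hf : HasDerivAt f f' t) (hg : HasDerivAt g g' t) :
    HasDerivAt (fun s => f s ⬝ᵥ g s) (f' ⬝ᵥ g t + f t ⬝ᵥ g') t := by
  have hfg := HasDerivAt.fun_sum (u := Finset.univ) fun i _ =>
    (hasDerivAt_pi.1 hf i).fun_mul (hasDerivAt_pi.1 hg i)
  rwa [_root_.dotProduct, _root_.dotProduct, ← Finset.sum_add_distrib]

section

variable {R : Type*} [CommRing R]

theorem cross_dotProduct_self (v w : Fin 3 → R) : v ⨯₃ w ⬝ᵥ w = 0 := by
  rw [dotProduct_comm, dot_cross_self]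

theorem cross_dotProduct_eq_neg_dotProduct_cross (u v w : Fin 3 → R) :
    u ⨯₃ v ⬝ᵥ w = -(v ⬝ᵥ u ⨯₃ w) := by
  rw [dotProduct_comm, triple_product_permutation, triple_product_permutation, ← cross_anticomm,
    dotProduct_neg]

end

/-- `C₁ = 2⟨y,z⟩ + ⟨x,x⟩`, `C₂ = 2⟨x,z⟩`, `C₃ = ⟨z,z⟩` are conserved along any
solution of the system `ẏ = b∧x`, `ẋ = y∧x + b∧z`, `ż = y∧z`. -/
theorem stmt6 (b : Fin 3 → ℝ) (y x z : ℝ → (Fin 3 → ℝ))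
    (hy : ∀ t, HasDerivAt y (b ⨯₃ x t) t)
    (hx : ∀ t, HasDerivAt x (y t ⨯₃ x t + b ⨯₃ z t) t)
    (hz : ∀ t, HasDerivAt z (y t ⨯₃ z t) t) :
    (∀ t, HasDerivAt (fun s => 2 * (y s ⬝ᵥ z s) + x s ⬝ᵥ x s) 0 t) ∧
    (∀ t, HasDerivAt (fun s => 2 * (x s ⬝ᵥ z s)) 0 t) ∧
    (∀ t, HasDerivAt (fun s => z s ⬝ᵥ z s) 0 t) := by
  refine ⟨fun t => ?_, fun t => ?_, fun t => ?_⟩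
  · refine ((((hy t).dotProduct (hz t)).const_mul 2).add ((hx t).dotProduct (hx t))).congr_deriv ?_
    rw [dot_self_cross, add_dotProduct, dotProduct_add, cross_dotProduct_self, dot_cross_self,
      cross_dotProduct_eq_neg_dotProduct_cross b, dotProduct_comm (b ⨯₃ z t)]
    ring
  · refine (((hx t).dotProduct (hz t)).const_mul 2).congr_deriv ?_
    rw [add_dotProduct, cross_dotProduct_self, add_zero, cross_dotProduct_eq_neg_dotProduct_cross,
      neg_add_cancel, mul_zero]
  · refine ((hz t).dotProduct (hz t)).congr_deriv ?_
    rw [cross_dotProduct_self, dot_cross_self, add_zero]
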